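/- arXiv:gr-qc/0004018 — 2 statements merged into one kernel-verified Lean document; each statement's English description precedes it below -/
import Mathlib

section
/- Let F be a nonzero complex self-dual 2-form on a 4-dimensional Lorentzian vector space with F² := F_{αβ}F^{αβ} ≠ 0, and set f ∈ ℂ with f² = -F²/4. Then the real eigenvalue problem F_{αβ} V^β ∝ V_α (separately for real and imaginary parts of F acting on real vectors V) has exactly two real null eigendirections k and l, with F_{αβ} k^β = f k_α and F_{αβ} l^β = -f l_α, and k, l can be normalized so that g(k,l) = -1. -/
noncomputable section
open scoped BigOperators

/-- The Minkowski metric diag(-1,1,1,1) (in an orthonormal basis of the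
Lorentzian vector space), ℂ-valued; it coincides with its inverse. -/
def gmink : Fin 4 → Fin 4 → ℂ := fun μ ν => if μ = ν then (if μ = 0 then -1 else 1) else 0

/-- The real Minkowski metric diag(-1,1,1,1). -/
def gminkR : Fin 4 → Fin 4 → ℝ := fun μ ν => if μ = ν then (if μ = 0 then -1 else 1) else 0

/-- The volume form η_{αβγδ}: the Levi-Civita alternating symbol with η_{0123} = 1. -/
def eps4 (a b c d : Fin 4) : ℝ :=
  ∑ σ : Equiv.Perm (Fin 4),
    if σ 0 = a ∧ σ 1 = b ∧ σ 2 = c ∧ σ 3 = d then ((Equiv.Perm.sign σ : ℤ) : ℝ) else 0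

/-- Raise both indices of a complex 2-form with the (inverse) metric. -/
def raise2 (F : Fin 4 → Fin 4 → ℂ) (α β : Fin 4) : ℂ :=
  ∑ μ, ∑ ν, gmink α μ * gmink β ν * F μ ν

/-- Hodge dual of a complex 2-form: (B*)_{αβ} = (1/2) η_{αβγδ} B^{γδ}. -/
def hodge (F : Fin 4 → Fin 4 → ℂ) (α β : Fin 4) : ℂ :=
  (1/2) * ∑ γ, ∑ δ, ((eps4 α β γ δ : ℝ) : ℂ) * raise2 F γ δ

/-- A self-dual complex 2-form: antisymmetric with F* = -iF. -/
def IsSelfDual (F : Fin 4 → Fin 4 → ℂ) : Prop :=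
  (∀ α β, F α β = -F β α) ∧ ∀ α β, hodge F α β = -Complex.I * F α β

/-- The contraction F_{αβ} G^{αβ} of two 2-forms. -/
def form2dot (F G : Fin 4 → Fin 4 → ℂ) : ℂ := ∑ α, ∑ β, F α β * raise2 G α β

/-- Scalar product of real vectors. -/
def ipR (u v : Fin 4 → ℝ) : ℝ := ∑ α, ∑ β, gminkR α β * u α * v β

/-- Lower the index of a real vector. -/
def lowR (v : Fin 4 → ℝ) (α : Fin 4) : ℝ := ∑ β, gminkR α β * v β

/-!
Self-duality forces `F` to be the matrix `selfDualForm E` of the complex 3-vector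
`E = (F₀₁, F₀₂, F₀₃)`, and then `F² = -4 E·E`, so `f² = E·E`.
Antisymmetry alone gives `(c + d) g(u, v) = 0` for real eigenvectors `u`, `v` with eigenvalues
`c`, `d`. Hence real eigenvectors for the eigenvalue `f ≠ 0` are null and mutually orthogonal,
and two orthogonal null vectors of Minkowski space are parallel: they form at most one line.
The line is not empty, as an explicit eigenvector can be written down in terms of `f`, `Re E`
and `Im E`; replacing `f` by `-f` gives the eigenvector for `-f`. The two are not parallel, being
eigenvectors for different eigenvalues, so they are not orthogonal and can be scaled to
`g(k, l) = -1`.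
-/

open Complex
open scoped Matrix

-- The Vandermonde product vanishes off the permutations of `(0, 1, 2, 3)` and is `±12` on them.
lemma eps4_eq (a b c d : Fin 4) :
    eps4 a b c d =
      (((b - a : ℤ) * (c - a) * (d - a) * (c - b) * (d - b) * (d - c) / 12 : ℤ) : ℝ) := by
  have key : ∀ a b c d : Fin 4, (∑ σ : Equiv.Perm (Fin 4),
      if σ 0 = a ∧ σ 1 = b ∧ σ 2 = c ∧ σ 3 = d then (Equiv.Perm.sign σ : ℤ) else 0) =
      (b - a : ℤ) * (c - a) * (d - a) * (c - b) * (d - b) * (d - c) / 12 := by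
    decide
  rw [← key, eps4]
  push_cast [apply_ite]
  rfl

lemma hodge_zero_one (F : Fin 4 → Fin 4 → ℂ) : hodge F 0 1 = (F 2 3 - F 3 2) / 2 := by
  simp (config := {decide := true}) [hodge, raise2, gmink, Fin.sum_univ_four, eps4_eq]
  ring

lemma hodge_zero_two (F : Fin 4 → Fin 4 → ℂ) : hodge F 0 2 = (F 3 1 - F 1 3) / 2 := by
  simp (config := {decide := true}) [hodge, raise2, gmink, Fin.sum_univ_four, eps4_eq]
  ring

lemma hodge_zero_three (F : Fin 4 → Fin 4 → ℂ) : hodge F 0 3 = (F 1 2 - F 2 1) / 2 := by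
  simp (config := {decide := true}) [hodge, raise2, gmink, Fin.sum_univ_four, eps4_eq]
  ring

def selfDualForm (E : Fin 3 → ℂ) : Fin 4 → Fin 4 → ℂ :=
  ![![0, E 0, E 1, E 2],
    ![-E 0, 0, -I * E 2, I * E 1],
    ![-E 1, I * E 2, 0, -I * E 0],
    ![-E 2, -I * E 1, I * E 0, 0]]

theorem IsSelfDual.eq_selfDualForm {F : Fin 4 → Fin 4 → ℂ} (hF : IsSelfDual F) :
    F = selfDualForm ![F 0 1, F 0 2, F 0 3] := by
  obtain ⟨hanti, hsd⟩ := hF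
  have hdiag (α : Fin 4) : F α α = 0 := by linear_combination hanti α α / 2
  have h23 : F 2 3 = -I * F 0 1 := by
    linear_combination (hodge_zero_one F).symm.trans (hsd 0 1) + hanti 3 2 / 2
  have h13 : F 1 3 = I * F 0 2 := by
    linear_combination -(hodge_zero_two F).symm.trans (hsd 0 2) + hanti 3 1 / 2
  have h12 : F 1 2 = -I * F 0 3 := by
    linear_combination (hodge_zero_three F).symm.trans (hsd 0 3) + hanti 2 1 / 2
  funext α β
  fin_cases α <;> fin_cases β <;>
    simp [selfDualForm, hdiag, h23, h13, h12, hanti 1 0, hanti 2 0, hanti 3 0, hanti 2 1,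
      hanti 3 1, hanti 3 2]

theorem form2dot_selfDualForm (E : Fin 3 → ℂ) :
    form2dot (selfDualForm E) (selfDualForm E) = -4 * ∑ i, E i ^ 2 := by
  simp (config := {decide := true}) [form2dot, raise2, gmink, Fin.sum_univ_four,
    Fin.sum_univ_three, selfDualForm]
  ring_nf
  simp only [I_sq]
  ring

lemma lowR_apply (v : Fin 4 → ℝ) (α : Fin 4) : lowR v α = gminkR α α * v α := by
  simp [lowR, gminkR]

lemma ipR_eq_sum_mul_lowR (u v : Fin 4 → ℝ) : ipR u v = ∑ α, u α * lowR v α := by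
  simp only [ipR, lowR, Finset.mul_sum]
  congr! 2
  ring

lemma ipR_comm (u v : Fin 4 → ℝ) : ipR u v = ipR v u := by
  rw [ipR, ipR, Finset.sum_comm]
  congr! 2 with α β
  simp only [gminkR, eq_comm (a := α)]
  split_ifs <;> simp_all <;> ring

lemma ipR_eq (u v : Fin 4 → ℝ) :
    ipR u v = -(u 0 * v 0) + u 1 * v 1 + u 2 * v 2 + u 3 * v 3 := by
  simp (config := {decide := true}) [ipR, gminkR, Fin.sum_univ_four]

lemma ipR_smul_right (u v : Fin 4 → ℝ) (t : ℝ) : ipR u (t • v) = t * ipR u v := by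
  simp only [ipR_eq, Pi.smul_apply, smul_eq_mul]
  ring

lemma eq_zero_of_apply_zero_of_ipR_self_eq_zero {w : Fin 4 → ℝ} (hw0 : w 0 = 0)
    (hww : ipR w w = 0) : w = 0 := by
  rw [ipR_eq, hw0] at hww
  have h1 : w 1 = 0 := by nlinarith [sq_nonneg (w 1), sq_nonneg (w 2), sq_nonneg (w 3)]
  have h2 : w 2 = 0 := by nlinarith [sq_nonneg (w 1), sq_nonneg (w 2), sq_nonneg (w 3)]
  have h3 : w 3 = 0 := by nlinarith [sq_nonneg (w 1), sq_nonneg (w 2), sq_nonneg (w 3)]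
  funext i
  fin_cases i <;> assumption

theorem exists_eq_smul_of_ipR_eq_zero {k v : Fin 4 → ℝ} (hk : k ≠ 0) (hkk : ipR k k = 0)
    (hvv : ipR v v = 0) (hkv : ipR k v = 0) : ∃ t : ℝ, v = t • k := by
  have hk0 : k 0 ≠ 0 := fun h0 => hk (eq_zero_of_apply_zero_of_ipR_self_eq_zero h0 hkk)
  set t := v 0 / k 0
  refine ⟨t, sub_eq_zero.mp (eq_zero_of_apply_zero_of_ipR_self_eq_zero ?_ ?_)⟩
  · simp [t, hk0]
  · rw [ipR_eq] at hkk hvv hkv ⊢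
    simp only [Pi.sub_apply, Pi.smul_apply, smul_eq_mul]
    linear_combination hvv - 2 * t * hkv + t ^ 2 * hkk

def IsRealEigenvector (F : Fin 4 → Fin 4 → ℂ) (c : ℂ) (v : Fin 4 → ℝ) : Prop :=
  ∀ α, ∑ β, F α β * (v β : ℂ) = c * (lowR v α : ℂ)

namespace IsRealEigenvector

variable {F : Fin 4 → Fin 4 → ℂ} {c d : ℂ} {u v : Fin 4 → ℝ}

lemma smul (hv : IsRealEigenvector F c v) (t : ℝ) : IsRealEigenvector F c (t • v) := by
  intro α
  have hlow : lowR (t • v) α = t * lowR v α := by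
    simp only [lowR_apply, Pi.smul_apply, smul_eq_mul]
    ring
  simp only [hlow, Pi.smul_apply, smul_eq_mul, ofReal_mul]
  rw [show ∑ β, F α β * ((t : ℂ) * v β) = t * ∑ β, F α β * v β by
    rw [Finset.mul_sum]; congr! 1; ring, hv α]
  ring

lemma eq_zero_of_ne (hc : IsRealEigenvector F c v) (hd : IsRealEigenvector F d v)
    (hcd : c ≠ d) : v = 0 := by
  funext α
  have h := (hc α).symm.trans (hd α)
  rw [← sub_eq_zero, ← sub_mul, mul_eq_zero, ofReal_eq_zero, lowR_apply] at h
  have hg : gminkR α α ≠ 0 := by simp only [gminkR, if_true]; split_ifs <;> norm_num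
  simpa [sub_eq_zero, hcd, hg] using h

-- `u^α F_{αβ} v^β` equals `d g(u, v)` and, by antisymmetry, `-c g(u, v)`.
lemma add_mul_ipR_eq_zero (hanti : ∀ α β, F α β = -F β α) (hu : IsRealEigenvector F c u)
    (hv : IsRealEigenvector F d v) : (c + d) * ipR u v = 0 := by
  have pair (u v : Fin 4 → ℝ) (d : ℂ) (hv : IsRealEigenvector F d v) :
      ∑ α, ∑ β, (u α : ℂ) * F α β * v β = d * ipR u v := by
    unfold IsRealEigenvector at hv
    simp_rw [mul_assoc, ← Finset.mul_sum, hv, ipR_eq_sum_mul_lowR]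
    push_cast
    rw [Finset.mul_sum]
    congr! 1
    ring
  have swap :
      ∑ α, ∑ β, (u α : ℂ) * F α β * v β = -∑ α, ∑ β, (v α : ℂ) * F α β * u β := by
    rw [Finset.sum_comm, ← Finset.sum_neg_distrib]
    congr! 1
    rw [← Finset.sum_neg_distrib]
    congr! 1
    rw [hanti]
    ring
  rw [pair u v d hv, pair v u c hu, ipR_comm v u] at swap
  linear_combination swap

lemma ipR_eq_zero (hanti : ∀ α β, F α β = -F β α) (hc : c ≠ 0)
    (hu : IsRealEigenvector F c u) (hv : IsRealEigenvector F c v) : ipR u v = 0 := by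
  have h := hu.add_mul_ipR_eq_zero hanti hv
  rw [← two_mul, mul_assoc, mul_eq_zero, mul_eq_zero, ofReal_eq_zero] at h
  simpa [hc] using h

lemma exists_eq_smul (hanti : ∀ α β, F α β = -F β α) (hc : c ≠ 0)
    (hu : IsRealEigenvector F c u) (hu0 : u ≠ 0) (hv : IsRealEigenvector F c v) :
    ∃ t : ℝ, v = t • u :=
  exists_eq_smul_of_ipR_eq_zero hu0 (hu.ipR_eq_zero hanti hc hu) (hv.ipR_eq_zero hanti hc hv)
    (hu.ipR_eq_zero hanti hc hv)

end IsRealEigenvector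

def principalNullVector (E : Fin 3 → ℂ) (f : ℂ) : Fin 4 → ℝ :=
  Matrix.vecCons (-(f.re ^ 2 + ∑ i, (E i).im ^ 2))
    (f.re • (re ∘ E) + f.im • (im ∘ E) + (re ∘ E) ⨯₃ (im ∘ E))

lemma re_im_of_sq_eq_sum_sq {E : Fin 3 → ℂ} {f : ℂ} (hf : f ^ 2 = ∑ i, E i ^ 2) :
    f.re ^ 2 - f.im ^ 2 = ∑ i, ((E i).re ^ 2 - (E i).im ^ 2) ∧
      f.re * f.im = ∑ i, (E i).re * (E i).im := by
  obtain ⟨hre, him⟩ := Complex.ext_iff.mp hf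
  simp only [sq, mul_re, mul_im, re_sum, im_sum] at hre him
  refine ⟨by simpa only [sq] using hre, ?_⟩
  simp only [Fin.sum_univ_three] at him ⊢
  linarith

theorem isRealEigenvector_principalNullVector {E : Fin 3 → ℂ} {f : ℂ}
    (hf : f ^ 2 = ∑ i, E i ^ 2) :
    IsRealEigenvector (selfDualForm E) f (principalNullVector E f) := by
  obtain ⟨h1, h2⟩ := re_im_of_sq_eq_sum_sq hf
  simp only [Fin.sum_univ_three] at h1 h2
  intro α
  fin_cases α <;> refine Complex.ext ?_ ?_ <;>
    simp (config := {decide := true}) [selfDualForm, principalNullVector, lowR_apply, gminkR,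
      Fin.sum_univ_four, Fin.sum_univ_three, cross_apply, Matrix.vecHead, Matrix.vecTail,
      -ofReal_pow]
  · linear_combination -f.re * h1 - f.im * h2
  · linear_combination -f.re * h2
  · linear_combination -(E 0).im * h2
  · linear_combination (E 0).im * h1 - (E 0).re * h2
  · linear_combination -(E 1).im * h2
  · linear_combination (E 1).im * h1 - (E 1).re * h2
  · linear_combination -(E 2).im * h2
  · linear_combination (E 2).im * h1 - (E 2).re * h2

theorem principalNullVector_ne_zero {E : Fin 3 → ℂ} {f : ℂ} (hf : f ^ 2 = ∑ i, E i ^ 2)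
    (hf0 : f ≠ 0) : principalNullVector E f ≠ 0 := by
  obtain ⟨h1, -⟩ := re_im_of_sq_eq_sum_sq hf
  simp only [Fin.sum_univ_three] at h1
  intro h
  have h0 : f.re ^ 2 + ((E 0).im ^ 2 + (E 1).im ^ 2 + (E 2).im ^ 2) = 0 := by
    have h0 := congrFun h 0
    simp only [principalNullVector, Fin.sum_univ_three, Matrix.cons_val_zero,
      Pi.zero_apply] at h0
    linarith
  apply hf0
  apply Complex.ext <;> simp only [zero_re, zero_im] <;>
    nlinarith [sq_nonneg f.re, sq_nonneg f.im, sq_nonneg (E 0).re, sq_nonneg (E 1).re,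
      sq_nonneg (E 2).re, sq_nonneg (E 0).im, sq_nonneg (E 1).im, sq_nonneg (E 2).im]

/-- A regular self-dual 2-form (F² ≠ 0) has exactly two real null
eigendirections k, l with eigenvalues f and -f (f² = -F²/4), and they can be
normalized so that g(k,l) = -1. -/
theorem selfdual_principal_null_directions (F : Fin 4 → Fin 4 → ℂ) (hF : IsSelfDual F)
    (hreg : form2dot F F ≠ 0) (f : ℂ) (hf : f^2 = -(form2dot F F)/4) :
    ∃ k l : Fin 4 → ℝ,
      k ≠ 0 ∧ l ≠ 0 ∧
      ipR k k = 0 ∧ ipR l l = 0 ∧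
      (∀ α, ∑ β, F α β * (k β : ℂ) = f * ((lowR k α : ℝ) : ℂ)) ∧
      (∀ α, ∑ β, F α β * (l β : ℂ) = -f * ((lowR l α : ℝ) : ℂ)) ∧
      ipR k l = -1 ∧
      (∀ v : Fin 4 → ℝ,
        (∀ α, ∑ β, F α β * (v β : ℂ) = f * ((lowR v α : ℝ) : ℂ)) → ∃ t : ℝ, v = t • k) ∧
      (∀ v : Fin 4 → ℝ,
        (∀ α, ∑ β, F α β * (v β : ℂ) = -f * ((lowR v α : ℝ) : ℂ)) → ∃ t : ℝ, v = t • l) := by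
  have hanti := hF.1
  obtain ⟨E, rfl⟩ : ∃ E, F = selfDualForm E := ⟨_, hF.eq_selfDualForm⟩
  have hfE : f ^ 2 = ∑ i, E i ^ 2 := by rw [hf, form2dot_selfDualForm]; ring
  have hfE' : (-f) ^ 2 = ∑ i, E i ^ 2 := by rw [neg_sq, hfE]
  have hf0 : f ≠ 0 := by rintro rfl; apply hreg; linear_combination 4 * hf
  have hf0' : -f ≠ 0 := neg_ne_zero.mpr hf0
  have hk := isRealEigenvector_principalNullVector hfE
  have hl := isRealEigenvector_principalNullVector hfE'
  have hk0 := principalNullVector_ne_zero hfE hf0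
  have hl0 := principalNullVector_ne_zero hfE' hf0'
  set k := principalNullVector E f
  set l := principalNullVector E (-f)
  have hkl : ipR k l ≠ 0 := fun h => by
    obtain ⟨t, ht⟩ := exists_eq_smul_of_ipR_eq_zero hk0 (hk.ipR_eq_zero hanti hf0 hk)
      (hl.ipR_eq_zero hanti hf0' hl) h
    exact hl0 ((ht ▸ hk.smul t).eq_zero_of_ne hl (self_ne_neg.mpr hf0))
  have hl' := hl.smul (-(ipR k l)⁻¹)
  have hl0' : -(ipR k l)⁻¹ • l ≠ 0 := smul_ne_zero (by simpa using hkl) hl0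
  refine ⟨k, _, hk0, hl0', hk.ipR_eq_zero hanti hf0 hk, hl'.ipR_eq_zero hanti hf0' hl', hk, hl',
    ?_, fun v hv => hk.exists_eq_smul hanti hf0 hk0 hv,
    fun v hv => hl'.exists_eq_smul hanti hf0' hl0' hv⟩
  rw [ipR_smul_right]
  field_simp
end
end

section
/- Let F be a complex self-dual 2-form on a 4-dimensional oriented Lorentzian vector space with regular eigenvalue f ≠ 0 and null eigenvectors k, l normalized by g(k,l) = -1, i.e. F_{αβ}k^β = f k_α and F_{αβ}l^β = -f l_α. Then F admits the representation F_{αβ} = f ( -k_α l_β + k_β l_α - i η_{αβγδ} k^γ l^δ ). -/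
noncomputable section
open scoped BigOperators

/-! A self-dual 2-form is determined by its electric part `E i = F 0 (i+1)`: self-duality forces
`F (i+1) (j+1) = -i ε_{ijm} E m`. Splitting `v = (v⁰, v⃗)`, the eigenvector equations become
`l⃗ ⬝ E = f l⁰`, `-k⁰ E - i k⃗ × E = f k⃗` and `-l⁰ E - i l⃗ × E = -f l⃗`. Crossing the equation for `k`
with `l⃗` and expanding `l⃗ × (k⃗ × E)` by the BAC-CAB rule removes every cross product with `E` and
leaves `-g(k,l) E = f (k⁰ l⃗ - l⁰ k⃗ - i k⃗ × l⃗)`, which is the electric part of the right-hand side. -/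

-- A Vandermonde product: it is `±12` on permutations of `0 1 2 3`, with the sign of the permutation.
def leviCivita4 (a b c d : Fin 4) : ℤ :=
  ((b : ℤ) - a) * ((c : ℤ) - a) * ((d : ℤ) - a) * ((c : ℤ) - b) * ((d : ℤ) - b) * ((d : ℤ) - c) / 12

theorem eps4_eq_leviCivita4 (a b c d : Fin 4) : eps4 a b c d = leviCivita4 a b c d := by
  have h : ∀ a b c d : Fin 4, (∑ σ : Equiv.Perm (Fin 4),
      if σ 0 = a ∧ σ 1 = b ∧ σ 2 = c ∧ σ 3 = d then (Equiv.Perm.sign σ : ℤ) else 0)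
      = leviCivita4 a b c d := by decide
  rw [eps4, ← h]
  push_cast
  rfl

open Matrix Complex

def electricPart (F : Fin 4 → Fin 4 → ℂ) : Fin 3 → ℂ := fun i => F 0 i.succ

def ofElectric (E : Fin 3 → ℂ) : Fin 4 → Fin 4 → ℂ :=
  !![0, E 0, E 1, E 2;
    -E 0, 0, -I * E 2, I * E 1;
    -E 1, I * E 2, 0, -I * E 0;
    -E 2, -I * E 1, I * E 0, 0]

def spatialPart (v : Fin 4 → ℝ) : Fin 3 → ℂ := fun i => (v i.succ : ℂ)

theorem hodge_zero_succ (F : Fin 4 → Fin 4 → ℂ) :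
    hodge F 0 1 = (F 2 3 - F 3 2) / 2 ∧ hodge F 0 2 = (F 3 1 - F 1 3) / 2 ∧
      hodge F 0 3 = (F 1 2 - F 2 1) / 2 := by
  refine ⟨?_, ?_, ?_⟩ <;>
  · simp [hodge, raise2, Fin.sum_univ_four, gmink, eps4_eq_leviCivita4, leviCivita4]
    ring

theorem IsSelfDual.eq_ofElectric {F : Fin 4 → Fin 4 → ℂ} (hF : IsSelfDual F) :
    F = ofElectric (electricPart F) := by
  obtain ⟨hanti, hsd⟩ := hF
  obtain ⟨h₁, h₂, h₃⟩ := hodge_zero_succ F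
  have hB₁ : F 2 3 = -I * F 0 1 := by linear_combination hsd 0 1 - h₁ + hanti 3 2 / 2
  have hB₂ : F 3 1 = -I * F 0 2 := by linear_combination hsd 0 2 - h₂ + hanti 1 3 / 2
  have hB₃ : F 1 2 = -I * F 0 3 := by linear_combination hsd 0 3 - h₃ + hanti 2 1 / 2
  funext α β
  fin_cases α <;> fin_cases β <;> simp [ofElectric, electricPart] <;> grind

theorem ofElectric_eigen {E : Fin 3 → ℂ} {v : Fin 4 → ℝ} {c : ℂ}
    (h : ∀ α, ∑ β, ofElectric E α β * (v β : ℂ) = c * (lowR v α : ℂ)) :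
    spatialPart v ⬝ᵥ E = -c * v 0 ∧ -(v 0 : ℂ) • E - I • (spatialPart v ⨯₃ E) = c • spatialPart v := by
  constructor
  · have h₀ := h 0
    simp [ofElectric, spatialPart, lowR, gminkR, Fin.sum_univ_four, dotProduct, Fin.sum_univ_three] at h₀ ⊢
    linear_combination h₀
  · funext i
    have hi := h i.succ
    fin_cases i <;> simp [ofElectric, spatialPart, lowR, gminkR, Fin.sum_univ_four, cross_apply] at hi ⊢ <;>
      linear_combination hi

theorem ofReal_ipR (u v : Fin 4 → ℝ) :
    (ipR u v : ℂ) = -(u 0 * v 0 : ℂ) + spatialPart u ⬝ᵥ spatialPart v := by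
  simp [ipR, gminkR, spatialPart, Fin.sum_univ_four, dotProduct, Fin.sum_univ_three]
  ring

theorem eq_smul_of_cross_eigen {R : Type*} [CommRing R] {i : R} (hi : i ^ 2 = -1)
    {E a b : Fin 3 → R} {a₀ b₀ f : R}
    (ha : -a₀ • E - i • (a ⨯₃ E) = f • a)
    (hbE : b ⬝ᵥ E = f * b₀)
    (hb : -b₀ • E - i • (b ⨯₃ E) = -f • b)
    (hab : a₀ * b₀ - a ⬝ᵥ b = 1) :
    E = f • (a₀ • b - b₀ • a - i • (a ⨯₃ b)) := by
  have hbE' : b ⨯₃ E = i • (b₀ • E - f • b) := by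
    linear_combination (norm := module) i • hb + hi • b ⨯₃ E
  have h := congrArg (b ⨯₃ ·) ha
  simp only [map_sub, map_smul, cross_cross_eq_smul_sub_smul', hbE, hbE', ← cross_anticomm a b] at h
  linear_combination (norm := module)
    i • h - hab • E + hi • ((a₀ * b₀ - a ⬝ᵥ b) • E - (f * a₀) • b + (f * b₀) • a)

theorem canonical_eq_ofElectric (f : ℂ) (k l : Fin 4 → ℝ) (α β : Fin 4) :
    f * (-((lowR k α : ℝ) : ℂ) * ((lowR l β : ℝ) : ℂ) + ((lowR k β : ℝ) : ℂ) * ((lowR l α : ℝ) : ℂ)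
        - I * ∑ γ, ∑ δ, ((eps4 α β γ δ * k γ * l δ : ℝ) : ℂ))
      = ofElectric (f • (((k 0 : ℝ) : ℂ) • spatialPart l - ((l 0 : ℝ) : ℂ) • spatialPart k
          - I • (spatialPart k ⨯₃ spatialPart l))) α β := by
  fin_cases α <;> fin_cases β <;>
    simp [lowR, gminkR, Fin.sum_univ_four, eps4_eq_leviCivita4, leviCivita4, ofElectric, spatialPart,
      cross_apply, vecHead, vecTail, -mul_eq_mul_left_iff] <;> grind [I_mul_I]

theorem selfdual_canonical_representation_general (F : Fin 4 → Fin 4 → ℂ) (hF : IsSelfDual F)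
    (f : ℂ) (k l : Fin 4 → ℝ)
    (hnorm : ipR k l = -1)
    (hk : ∀ α, ∑ β, F α β * (k β : ℂ) = f * ((lowR k α : ℝ) : ℂ))
    (hl : ∀ α, ∑ β, F α β * (l β : ℂ) = -f * ((lowR l α : ℝ) : ℂ)) :
    ∀ α β : Fin 4,
      F α β = f * (-((lowR k α : ℝ) : ℂ) * ((lowR l β : ℝ) : ℂ)
        + ((lowR k β : ℝ) : ℂ) * ((lowR l α : ℝ) : ℂ)
        - Complex.I * ∑ γ, ∑ δ, ((eps4 α β γ δ * k γ * l δ : ℝ) : ℂ)) := by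
  have hFE := hF.eq_ofElectric
  rw [hFE] at hk hl
  obtain ⟨-, hk⟩ := ofElectric_eigen hk
  obtain ⟨hl₀, hl⟩ := ofElectric_eigen hl
  have hkl : (k 0 : ℂ) * l 0 - spatialPart k ⬝ᵥ spatialPart l = 1 := by
    linear_combination ofReal_ipR k l - (by exact_mod_cast hnorm : (ipR k l : ℂ) = -1)
  have hE := eq_smul_of_cross_eigen I_sq hk (by rw [hl₀, neg_neg]) hl hkl
  intro α β
  rw [canonical_eq_ofElectric, ← hE, ← hFE]

/-- A regular self-dual 2-form with eigenvalue f ≠ 0 and normalized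
null eigenvectors k, l admits the representation
F_{αβ} = f(-k_α l_β + k_β l_α - i η_{αβγδ} k^γ l^δ). -/
theorem selfdual_canonical_representation (F : Fin 4 → Fin 4 → ℂ) (hF : IsSelfDual F)
    (f : ℂ) (hfne : f ≠ 0) (k l : Fin 4 → ℝ)
    (hknull : ipR k k = 0) (hlnull : ipR l l = 0) (hnorm : ipR k l = -1)
    (hk : ∀ α, ∑ β, F α β * (k β : ℂ) = f * ((lowR k α : ℝ) : ℂ))
    (hl : ∀ α, ∑ β, F α β * (l β : ℂ) = -f * ((lowR l α : ℝ) : ℂ)) :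
    ∀ α β : Fin 4,
      F α β = f * (-((lowR k α : ℝ) : ℂ) * ((lowR l β : ℝ) : ℂ)
        + ((lowR k β : ℝ) : ℂ) * ((lowR l α : ℝ) : ℂ)
        - Complex.I * ∑ γ, ∑ δ, ((eps4 α β γ δ * k γ * l δ : ℝ) : ℂ)) :=
  selfdual_canonical_representation_general F hF f k l hnorm hk hl
end
end
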